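/- Let T be a tensor of format m × n × p over a field K of rank r, with slices T_1, …, T_p, and let T' be the tensor of format (m+n) × (m+n) × (p+1) whose first slice is I_{m+n} and whose remaining slices are A_i = [[0, T_i], [0, 0]] (block sizes m, n). Then T' admits a decomposition T' = Σ_{i=1}^{r+m+n} u'_i ⊗ v'_i ⊗ w'_i in which the first coordinate w'_{i1} of every vector w'_i ∈ K^{p+1} equals 1. -/

import Mathlib

/-! Take a rank-`r` decomposition of `T`, pad its vectors by zeros to the blocks of `T'`, and give
every `w` the first coordinate `1`. These `r` terms reproduce the slices `Aₖ` exactly, while their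
first slice is some `N = fromBlocks 0 X 0 0`. The missing `I - N` is added row by row as
`m + n` terms `eₐ ⊗ (row a of I - N) ⊗ (1, 0, …, 0)`, which vanish on the other slices. -/

open Matrix BigOperators

variable {K : Type*} [Field K]

/-- `T` equals the sum of `r` rank-one tensors with components `u i`, `v i`, `w i`. -/
def tensorDecomp {α β γ : Type*} [Fintype α] [Fintype β] [Fintype γ]
    (T : α → β → γ → K) (r : ℕ)
    (u : Fin r → α → K) (v : Fin r → β → K) (w : Fin r → γ → K) : Prop :=
  ∀ i j k, T i j k = ∑ l, u l i * v l j * w l k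

/-- The rank of a tensor: least number of rank-one summands. -/
noncomputable def tensorRank {α β γ : Type*} [Fintype α] [Fintype β] [Fintype γ]
    (T : α → β → γ → K) : ℕ :=
  sInf {r | ∃ u v w, tensorDecomp T r u v w}

/-- The `k`-th z-zSlice of a tensor. -/
def zSlice {α β : Type*} {p : ℕ} (T : α → β → Fin p → K) (k : Fin p) : Matrix α β K :=
  Matrix.of fun i j => T i j k

/-- A matrix is diagonalizable if it is similar over `K` to a diagonal matrix. -/
def Diagonalizable {ι : Type*} [Fintype ι] [DecidableEq ι] (M : Matrix ι ι K) : Prop :=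
  ∃ P : Matrix ι ι K, IsUnit P ∧ ∃ d : ι → K, M = P * Matrix.diagonal d * P⁻¹

lemma tensorDecomp_comp_equiv {α β γ ι : Type*} [Fintype α] [Fintype β] [Fintype γ] [Fintype ι]
    {T : α → β → γ → K} {r : ℕ} (e : ι ≃ Fin r)
    {u : ι → α → K} {v : ι → β → K} {w : ι → γ → K}
    (h : ∀ i j k, T i j k = ∑ l, u l i * v l j * w l k) :
    tensorDecomp T r (u ∘ e.symm) (v ∘ e.symm) (w ∘ e.symm) := fun i j k => by
  rw [h, ← e.symm.sum_comp]
  rfl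

lemma exists_tensorDecomp_tensorRank {α β γ : Type*} [Fintype α] [Fintype β] [Fintype γ]
    [DecidableEq α] [DecidableEq β] (T : α → β → γ → K) :
    ∃ u v w, tensorDecomp T (tensorRank T) u v w := by
  have hunit : ∀ i j k, T i j k = ∑ ab : α × β,
      (Pi.single ab.1 1 : α → K) i * (Pi.single ab.2 1 : β → K) j * T ab.1 ab.2 k := by
    intro i j k
    simp [Fintype.sum_prod_type, Pi.single_apply]
  exact Nat.sInf_mem (s := {r | ∃ u v w, tensorDecomp T r u v w})
    ⟨_, _, _, _, tensorDecomp_comp_equiv (Fintype.equivFin _) hunit⟩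

lemma tensorDecomp.fromBlocks_zero_zSlice {α β : Type*} [Fintype α] [Fintype β] {p r : ℕ}
    {T : α → β → Fin p → K} {u : Fin r → α → K} {v : Fin r → β → K} {w : Fin r → Fin p → K}
    (h : tensorDecomp T r u v w) :
    tensorDecomp (fun (i j : α ⊕ β) k => fromBlocks 0 (zSlice T k) 0 0 i j) r
      (fun l => Sum.elim (u l) 0) (fun l => Sum.elim (0 : α → K) (v l)) w := by
  rintro (a | b) (a' | b') k <;> simp [zSlice, h _ _ k]

lemma exists_decomp_cons_slice_of_decomp {α β ι : Type*} [Fintype α] [Fintype β] [Fintype ι]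
    [DecidableEq α] {p : ℕ} {S : α → β → Fin p → K}
    {u : ι → α → K} {v : ι → β → K} {w : ι → Fin p → K}
    (h : ∀ i j k, S i j k = ∑ l, u l i * v l j * w l k) (M : Matrix α β K)
    (S' : α → β → Fin (p + 1) → K) (h0 : ∀ i j, S' i j 0 = M i j)
    (hsucc : ∀ i j k, S' i j k.succ = S i j k) :
    ∃ (u' : ι ⊕ α → α → K) (v' : ι ⊕ α → β → K) (w' : ι ⊕ α → Fin (p + 1) → K),
      (∀ i j k, S' i j k = ∑ l, u' l i * v' l j * w' l k) ∧ ∀ l, w' l 0 = 1 := by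
  let R : α → β → K := M - ∑ l, vecMulVec (u l) (v l)
  refine ⟨Sum.elim u fun a => Pi.single a 1, Sum.elim v R,
    Sum.elim (fun l => Fin.cons 1 (w l)) fun _ => Fin.cons 1 0, fun i j k => ?_, ?_⟩
  · simp only [Fintype.sum_sum_type, Sum.elim_inl, Sum.elim_inr]
    cases k using Fin.cases with
    | zero =>
      simp only [h0, Fin.cons_zero, mul_one]
      simp [Pi.single_apply, R, vecMulVec_apply, Matrix.sum_apply]
    | succ k => simp [hsucc, h]
  · rintro (l | a) <;> rfl

theorem shitov_padding_decomposition_with_unit_first_coordinates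
    {m n p r : ℕ} (T : Fin m → Fin n → Fin p → K)
    (hrank : tensorRank T = r)
    (T' : (Fin m ⊕ Fin n) → (Fin m ⊕ Fin n) → Fin (p + 1) → K)
    (h0 : ∀ i j, T' i j 0 = (1 : Matrix (Fin m ⊕ Fin n) (Fin m ⊕ Fin n) K) i j)
    (hrest : ∀ i j (k : Fin p), T' i j k.succ = Matrix.fromBlocks 0 (zSlice T k) 0 0 i j) :
    ∃ (u' v' : Fin (r + m + n) → (Fin m ⊕ Fin n) → K)
      (w' : Fin (r + m + n) → Fin (p + 1) → K),
      tensorDecomp T' (r + m + n) u' v' w' ∧ ∀ i, w' i 0 = 1 := by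
  obtain ⟨u, v, w, hT⟩ : ∃ u v w, tensorDecomp T r u v w :=
    hrank ▸ exists_tensorDecomp_tensorRank T
  obtain ⟨u', v', w', hT', hw'⟩ :=
    exists_decomp_cons_slice_of_decomp hT.fromBlocks_zero_zSlice 1 T' h0 hrest
  let e : Fin r ⊕ (Fin m ⊕ Fin n) ≃ Fin (r + m + n) :=
    (Equiv.sumAssoc _ _ _).symm.trans
      ((finSumFinEquiv.sumCongr (Equiv.refl _)).trans finSumFinEquiv)
  exact ⟨_, _, _, tensorDecomp_comp_equiv e hT', fun i => hw' _⟩
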